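/- Let T be an infinite tree and M an ergodic channel on a finite alphabet A of size k. Then the reconstruction problem for T and M is solvable if and only if, when the root value σ_ρ is chosen uniformly at random from A, liminf_{n→∞} Δ_n > 1/k, where Δ_n = Σ_σ P[σ_n = σ] · max_{i∈A} P[σ_ρ = i | σ_n = σ] is the success probability of maximum-likelihood reconstruction of the root from the level-n configuration. -/
import Mathlib


open Filter

/-!
An infinite rooted tree in which every vertex has finitely many children is
modelled by the (finite, nonempty) types `V n` of vertices at distance `n`
from the root, together with the parent maps `V (n+1) → V n`; the root is the
unique element of `V 0`.
-/

/-- The distribution of the configuration at level `n` of the tree described by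
the levels `V` and the parent maps `parent`, for the broadcast process with
channel `M`, given that the root has value `i`. -/
noncomputable def treeDist {A : Type} [Fintype A] [DecidableEq A]
    {V : ℕ → Type} [∀ n, Fintype (V n)] [∀ n, DecidableEq (V n)]
    (M : A → A → ℝ) (parent : ∀ n, V (n + 1) → V n) (i : A) :
    (n : ℕ) → (V n → A) → ℝ
  | 0 => fun σ => if σ = (fun _ => i) then 1 else 0
  | n + 1 => fun τ => ∑ σ : V n → A, treeDist M parent i n σ *
      ∏ w : V (n + 1), M (σ (parent n w)) (τ w)

/-- Total variation distance between two (densities of) probability measures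
on a finite set. -/
noncomputable def tvDist {Ω : Type*} [Fintype Ω] (P Q : Ω → ℝ) : ℝ :=
  (1 / 2) * ∑ σ, |P σ - Q σ|

/-- The `m`-step transition probabilities of the channel `M`. -/
noncomputable def stepPow {A : Type} [Fintype A] [DecidableEq A]
    (M : A → A → ℝ) : ℕ → A → A → ℝ
  | 0 => fun i j => if i = j then 1 else 0
  | m + 1 => fun i j => ∑ k, stepPow M m i k * M k j

/-- `M` defines an ergodic (irreducible and aperiodic) markov chain: some power
of the transition matrix has all entries positive. -/
def IsErgodic {A : Type} [Fintype A] [DecidableEq A] (M : A → A → ℝ) : Prop :=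
  ∃ m : ℕ, ∀ i j : A, 0 < stepPow M m i j

/-- The success probability of maximum-likelihood reconstruction of the root
(chosen uniformly) from the level-`n` configuration:
`Δ_n = Σ_σ P[σ_n = σ] ⬝ max_i P[σ_ρ = i | σ_n = σ]`. -/
noncomputable def mlSuccess {A : Type} [Fintype A] [DecidableEq A] [Nonempty A]
    {V : ℕ → Type} [∀ n, Fintype (V n)] [∀ n, DecidableEq (V n)]
    (M : A → A → ℝ) (parent : ∀ n, V (n + 1) → V n) (n : ℕ) : ℝ :=
  ∑ σ : V n → A,
    (∑ j, (Fintype.card A : ℝ)⁻¹ * treeDist M parent j n σ) *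
      (Finset.univ.sup' Finset.univ_nonempty fun i : A =>
        ((Fintype.card A : ℝ)⁻¹ * treeDist M parent i n σ) /
          (∑ j, (Fintype.card A : ℝ)⁻¹ * treeDist M parent j n σ))


section Aux

variable {A : Type} [Fintype A] [DecidableEq A]
    {V : ℕ → Type} [∀ n, Fintype (V n)] [∀ n, DecidableEq (V n)]
    (M : A → A → ℝ) (parent : ∀ n, V (n + 1) → V n)

lemma treeDist_nonneg (hnn : ∀ i j, 0 ≤ M i j) (i : A) :
    ∀ n (σ : V n → A), 0 ≤ treeDist M parent i n σ := by
  intro n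
  induction n with
  | zero => intro σ; simp only [treeDist]; positivity
  | succ n ih =>
      intro τ
      simp only [treeDist]
      exact Finset.sum_nonneg fun σ _ => mul_nonneg (ih σ)
        (Finset.prod_nonneg fun w _ => hnn _ _)

lemma treeDist_sum (hrow : ∀ i, ∑ j, M i j = 1) (i : A) :
    ∀ n, ∑ σ : V n → A, treeDist M parent i n σ = 1 := by
  intro n
  induction n with
  | zero => simp [treeDist]
  | succ n ih =>
      simp only [treeDist]
      rw [Finset.sum_comm]
      have : ∀ σ : V n → A,
          ∑ τ : V (n+1) → A, ∏ w, M (σ (parent n w)) (τ w)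
            = ∏ w : V (n+1), ∑ a, M (σ (parent n w)) a := by
        intro σ
        rw [Finset.prod_univ_sum]
        rfl
      calc ∑ σ : V n → A, ∑ τ : V (n+1) → A,
              treeDist M parent i n σ * ∏ w, M (σ (parent n w)) (τ w)
          = ∑ σ : V n → A, treeDist M parent i n σ *
              ∑ τ : V (n+1) → A, ∏ w, M (σ (parent n w)) (τ w) := by
            simp [Finset.mul_sum]
        _ = ∑ σ : V n → A, treeDist M parent i n σ := by
            refine Finset.sum_congr rfl fun σ _ => ?_
            rw [this σ]
            simp [hrow]
        _ = 1 := ih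

lemma tvDist_nonneg {Ω : Type*} [Fintype Ω] (P Q : Ω → ℝ) : 0 ≤ tvDist P Q := by
  unfold tvDist; positivity

/-- Data processing inequality for a finite kernel. -/
lemma tvDist_comp {Ω Ω' : Type*} [Fintype Ω] [Fintype Ω'] (P Q : Ω → ℝ)
    (K : Ω → Ω' → ℝ) (hK : ∀ s t, 0 ≤ K s t) (hKrow : ∀ s, ∑ t, K s t = 1) :
    tvDist (fun t => ∑ s, P s * K s t) (fun t => ∑ s, Q s * K s t) ≤ tvDist P Q := by
  unfold tvDist
  have h2 : (0:ℝ) ≤ 1/2 := by norm_num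
  refine mul_le_mul_of_nonneg_left ?_ h2
  calc ∑ t, |∑ s, P s * K s t - ∑ s, Q s * K s t|
      = ∑ t, |∑ s, (P s - Q s) * K s t| := by
        refine Finset.sum_congr rfl fun t _ => ?_
        rw [← Finset.sum_sub_distrib]
        simp [sub_mul]
    _ ≤ ∑ t, ∑ s, |P s - Q s| * K s t := by
        refine Finset.sum_le_sum fun t _ => ?_
        refine (Finset.abs_sum_le_sum_abs _ _).trans_eq ?_
        refine Finset.sum_congr rfl fun s _ => ?_
        rw [abs_mul, abs_of_nonneg (hK s t)]
    _ = ∑ s, |P s - Q s| * ∑ t, K s t := by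
        rw [Finset.sum_comm]; simp [Finset.mul_sum]
    _ = ∑ s, |P s - Q s| := by simp [hKrow]

lemma treeDist_succ_anti (hnn : ∀ i j, 0 ≤ M i j) (hrow : ∀ i, ∑ j, M i j = 1)
    (i j : A) (n : ℕ) :
    tvDist (treeDist M parent i (n+1)) (treeDist M parent j (n+1)) ≤
      tvDist (treeDist M parent i n) (treeDist M parent j n) := by
  have := tvDist_comp (treeDist M parent i n) (treeDist M parent j n)
    (fun σ (τ : V (n+1) → A) => ∏ w, M (σ (parent n w)) (τ w))
    (fun s t => Finset.prod_nonneg fun w _ => hnn _ _)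
    (fun σ => by
      rw [show (∑ τ : V (n+1) → A, ∏ w, M (σ (parent n w)) (τ w))
            = ∏ w : V (n+1), ∑ a, M (σ (parent n w)) a from by
          rw [Finset.prod_univ_sum]; rfl]
      simp [hrow])
  exact this

lemma sum_max_eq {Ω : Type*} [Fintype Ω] (P Q : Ω → ℝ)
    (hP : ∑ σ, P σ = 1) (hQ : ∑ σ, Q σ = 1) :
    ∑ σ, max (P σ) (Q σ) = 1 + tvDist P Q := by
  have key : ∀ a b : ℝ, max a b = (a + b + |a - b|) / 2 := by
    intro a b
    rcases le_total a b with h | h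
    · rw [max_eq_right h, abs_of_nonpos (by linarith)]; ring
    · rw [max_eq_left h, abs_of_nonneg (by linarith)]; ring
  simp only [key, tvDist]
  rw [← Finset.sum_div, Finset.sum_add_distrib, Finset.sum_add_distrib, hP, hQ]
  ring

end Aux


lemma sup'_div_sum {A : Type} [Fintype A] [Nonempty A] (x : A → ℝ) (hx : ∀ i, 0 ≤ x i) :
    (∑ j, x j) * Finset.univ.sup' Finset.univ_nonempty (fun i => x i / ∑ j, x j)
      = Finset.univ.sup' Finset.univ_nonempty x := by
  rcases eq_or_lt_of_le (Finset.sum_nonneg fun j _ => hx j) with h0 | hpos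
  · rw [← h0, zero_mul]
    have hall : ∀ i, x i = 0 := by
      intro i
      exact (Finset.sum_eq_zero_iff_of_nonneg (fun j _ => hx j)).mp h0.symm i (Finset.mem_univ i)
    symm
    rw [show x = fun _ => (0:ℝ) from funext hall, Finset.sup'_const]
  · have hdist : Finset.univ.sup' Finset.univ_nonempty (fun i => x i / ∑ j, x j)
        = (Finset.univ.sup' Finset.univ_nonempty x) / ∑ j, x j := by
      exact (Finset.comp_sup'_eq_sup'_comp (f := x) Finset.univ_nonempty
        (fun y => y / ∑ j, x j) (fun a b => (max_div_div_right hpos.le a b).symm)).symm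
    rw [hdist, mul_comm, div_mul_cancel₀ _ hpos.ne']

lemma mlSuccess_eq {A : Type} [Fintype A] [DecidableEq A] [Nonempty A]
    {V : ℕ → Type} [∀ n, Fintype (V n)] [∀ n, DecidableEq (V n)]
    (M : A → A → ℝ) (parent : ∀ n, V (n + 1) → V n)
    (hnn : ∀ i j, 0 ≤ M i j) (n : ℕ) :
    mlSuccess M parent n = ∑ σ : V n → A,
      Finset.univ.sup' Finset.univ_nonempty
        (fun i : A => (Fintype.card A : ℝ)⁻¹ * treeDist M parent i n σ) := by
  unfold mlSuccess
  refine Finset.sum_congr rfl fun σ _ => ?_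
  exact sup'_div_sum (fun i => (Fintype.card A : ℝ)⁻¹ * treeDist M parent i n σ)
    (fun i => mul_nonneg (by positivity) (treeDist_nonneg M parent hnn i n σ))


/-- For an infinite tree `T` and an ergodic channel `M` on an alphabet of size
`k`, the reconstruction problem is solvable if and only if
`liminf_n Δ_n > 1/k`, where `Δ_n` is the success probability of
maximum-likelihood reconstruction of the uniformly chosen root from level `n`. -/
theorem solvable_iff_maximum_likelihood {A : Type} [Fintype A] [DecidableEq A] [Nonempty A]
    (M : A → A → ℝ) (hnn : ∀ i j, 0 ≤ M i j) (hrow : ∀ i, ∑ j, M i j = 1)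
    (herg : IsErgodic M)
    (V : ℕ → Type) [∀ n, Fintype (V n)] [∀ n, DecidableEq (V n)] [Unique (V 0)]
    (parent : ∀ n, V (n + 1) → V n) (hinf : ∀ n, Nonempty (V n)) :
    (∃ i j : A, ∃ L > 0, Tendsto
        (fun n => tvDist (treeDist M parent i n) (treeDist M parent j n))
        atTop (nhds L)) ↔
    (Fintype.card A : ℝ)⁻¹ < liminf (fun n => mlSuccess M parent n) atTop := by
  classical
  have hk0 : (0:ℝ) < (Fintype.card A : ℝ)⁻¹ := inv_pos.mpr (by exact_mod_cast Fintype.card_pos)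
  have hd0 : ∀ (i j : A) (n : ℕ), 0 ≤ tvDist (treeDist M parent i n) (treeDist M parent j n) :=
    fun i j n => tvDist_nonneg _ _
  have hanti : ∀ i j : A,
      Antitone (fun n => tvDist (treeDist M parent i n) (treeDist M parent j n)) :=
    fun i j => antitone_nat_of_succ_le fun n => treeDist_succ_anti M parent hnn hrow i j n
  have hbdd : ∀ i j : A, BddBelow (Set.range
      (fun n => tvDist (treeDist M parent i n) (treeDist M parent j n))) :=
    fun i j => ⟨0, by rintro x ⟨n, rfl⟩; exact hd0 i j n⟩
  have htend : ∀ i j : A, Tendsto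
      (fun n => tvDist (treeDist M parent i n) (treeDist M parent j n)) atTop
      (nhds (⨅ n, tvDist (treeDist M parent i n) (treeDist M parent j n))) :=
    fun i j => tendsto_atTop_ciInf (hanti i j) (hbdd i j)
  have hml : ∀ n, mlSuccess M parent n = ∑ σ : V n → A,
      Finset.univ.sup' Finset.univ_nonempty
        (fun i : A => (Fintype.card A : ℝ)⁻¹ * treeDist M parent i n σ) :=
    fun n => mlSuccess_eq M parent hnn n
  have hub : ∀ n, mlSuccess M parent n ≤ 1 := by
    intro n
    rw [hml n]
    calc ∑ σ : V n → A, Finset.univ.sup' Finset.univ_nonempty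
            (fun i : A => (Fintype.card A : ℝ)⁻¹ * treeDist M parent i n σ)
        ≤ ∑ σ : V n → A, ∑ i : A, (Fintype.card A : ℝ)⁻¹ * treeDist M parent i n σ := by
          refine Finset.sum_le_sum fun σ _ => ?_
          refine Finset.sup'_le _ _ fun i _ => ?_
          exact Finset.single_le_sum
            (fun j _ => mul_nonneg hk0.le (treeDist_nonneg M parent hnn j n σ))
            (Finset.mem_univ i)
      _ = ∑ i : A, ∑ σ : V n → A, (Fintype.card A : ℝ)⁻¹ * treeDist M parent i n σ :=
          Finset.sum_comm
      _ = ∑ _i : A, (Fintype.card A : ℝ)⁻¹ := by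
          refine Finset.sum_congr rfl fun i _ => ?_
          rw [← Finset.mul_sum, treeDist_sum M parent hrow i n, mul_one]
      _ = 1 := by
          rw [Finset.sum_const, Finset.card_univ, nsmul_eq_mul]
          have : (Fintype.card A : ℝ) ≠ 0 := by exact_mod_cast Fintype.card_pos.ne'
          field_simp
  have hlow : ∀ (i j : A) (n : ℕ),
      (Fintype.card A : ℝ)⁻¹ * (1 + tvDist (treeDist M parent i n) (treeDist M parent j n))
        ≤ mlSuccess M parent n := by
    intro i j n
    rw [hml n]
    have hmax := sum_max_eq (treeDist M parent i n) (treeDist M parent j n)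
      (treeDist_sum M parent hrow i n) (treeDist_sum M parent hrow j n)
    calc (Fintype.card A : ℝ)⁻¹ *
          (1 + tvDist (treeDist M parent i n) (treeDist M parent j n))
        = ∑ σ : V n → A, max ((Fintype.card A : ℝ)⁻¹ * treeDist M parent i n σ)
            ((Fintype.card A : ℝ)⁻¹ * treeDist M parent j n σ) := by
          rw [← hmax, Finset.mul_sum]
          exact Finset.sum_congr rfl fun σ _ => mul_max_of_nonneg _ _ hk0.le
      _ ≤ ∑ σ : V n → A, Finset.univ.sup' Finset.univ_nonempty
            (fun i : A => (Fintype.card A : ℝ)⁻¹ * treeDist M parent i n σ) := by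
          refine Finset.sum_le_sum fun σ _ => ?_
          exact max_le
            (Finset.le_sup' (fun a : A => (Fintype.card A : ℝ)⁻¹ * treeDist M parent a n σ)
              (Finset.mem_univ i))
            (Finset.le_sup' (fun a : A => (Fintype.card A : ℝ)⁻¹ * treeDist M parent a n σ)
              (Finset.mem_univ j))
  constructor
  · rintro ⟨i, j, L, hL, hT⟩
    have hLeq : L = ⨅ n, tvDist (treeDist M parent i n) (treeDist M parent j n) :=
      tendsto_nhds_unique hT (htend i j)
    have h1 : ∀ n, (Fintype.card A : ℝ)⁻¹ * (1 + L) ≤ mlSuccess M parent n := by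
      intro n
      refine le_trans ?_ (hlow i j n)
      have hle := ciInf_le (hbdd i j) n
      rw [← hLeq] at hle
      nlinarith
    calc (Fintype.card A : ℝ)⁻¹ < (Fintype.card A : ℝ)⁻¹ * (1 + L) := by nlinarith
      _ ≤ liminf (fun n => mlSuccess M parent n) atTop :=
          le_liminf_of_le (isCoboundedUnder_ge_of_le atTop hub) (Eventually.of_forall h1)
  · intro h
    by_contra hns
    push_neg at hns
    obtain ⟨i0⟩ := ‹Nonempty A›
    have hzero : ∀ i : A, Tendsto
        (fun n => tvDist (treeDist M parent i n) (treeDist M parent i0 n)) atTop (nhds 0) := by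
      intro i
      have hI := htend i i0
      rcases (le_ciInf (fun n => hd0 i i0 n)).lt_or_eq with hpos | heq
      · exact absurd hI (hns i i0 _ hpos)
      · rwa [← heq] at hI
    have hml0 : ∀ n, 0 ≤ mlSuccess M parent n := by
      intro n
      rw [hml n]
      refine Finset.sum_nonneg fun σ _ => ?_
      exact le_trans (mul_nonneg hk0.le (treeDist_nonneg M parent hnn i0 n σ))
        (Finset.le_sup' (fun a : A => (Fintype.card A : ℝ)⁻¹ * treeDist M parent a n σ)
          (Finset.mem_univ i0))
    have hup : ∀ n, mlSuccess M parent n ≤ (Fintype.card A : ℝ)⁻¹ +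
        ∑ i : A, 2 * (Fintype.card A : ℝ)⁻¹ *
          tvDist (treeDist M parent i n) (treeDist M parent i0 n) := by
      intro n
      rw [hml n]
      calc ∑ σ : V n → A, Finset.univ.sup' Finset.univ_nonempty
              (fun i : A => (Fintype.card A : ℝ)⁻¹ * treeDist M parent i n σ)
          ≤ ∑ σ : V n → A, ((Fintype.card A : ℝ)⁻¹ * treeDist M parent i0 n σ +
              ∑ i : A, |(Fintype.card A : ℝ)⁻¹ * treeDist M parent i n σ -
                (Fintype.card A : ℝ)⁻¹ * treeDist M parent i0 n σ|) := by
            refine Finset.sum_le_sum fun σ _ => ?_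
            refine Finset.sup'_le _ _ fun i _ => ?_
            have h1 : (Fintype.card A : ℝ)⁻¹ * treeDist M parent i n σ -
                (Fintype.card A : ℝ)⁻¹ * treeDist M parent i0 n σ ≤
                |(Fintype.card A : ℝ)⁻¹ * treeDist M parent i n σ -
                  (Fintype.card A : ℝ)⁻¹ * treeDist M parent i0 n σ| := le_abs_self _
            have h2 : |(Fintype.card A : ℝ)⁻¹ * treeDist M parent i n σ -
                  (Fintype.card A : ℝ)⁻¹ * treeDist M parent i0 n σ| ≤
                ∑ i : A, |(Fintype.card A : ℝ)⁻¹ * treeDist M parent i n σ -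
                  (Fintype.card A : ℝ)⁻¹ * treeDist M parent i0 n σ| :=
              Finset.single_le_sum (f := fun a : A =>
                  |(Fintype.card A : ℝ)⁻¹ * treeDist M parent a n σ -
                    (Fintype.card A : ℝ)⁻¹ * treeDist M parent i0 n σ|)
                (fun j _ => abs_nonneg _) (Finset.mem_univ i)
            linarith
        _ = (∑ σ : V n → A, (Fintype.card A : ℝ)⁻¹ * treeDist M parent i0 n σ) +
            ∑ i : A, ∑ σ : V n → A, |(Fintype.card A : ℝ)⁻¹ * treeDist M parent i n σ -
              (Fintype.card A : ℝ)⁻¹ * treeDist M parent i0 n σ| := by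
            rw [Finset.sum_add_distrib]
            congr 1
            exact Finset.sum_comm
        _ = (Fintype.card A : ℝ)⁻¹ + ∑ i : A, 2 * (Fintype.card A : ℝ)⁻¹ *
              tvDist (treeDist M parent i n) (treeDist M parent i0 n) := by
            congr 1
            · rw [← Finset.mul_sum, treeDist_sum M parent hrow i0 n, mul_one]
            · refine Finset.sum_congr rfl fun i _ => ?_
              have habs : ∀ σ : V n → A, |(Fintype.card A : ℝ)⁻¹ * treeDist M parent i n σ -
                  (Fintype.card A : ℝ)⁻¹ * treeDist M parent i0 n σ| =
                  (Fintype.card A : ℝ)⁻¹ * |treeDist M parent i n σ - treeDist M parent i0 n σ| :=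
                fun σ => by rw [← mul_sub, abs_mul, abs_of_nonneg hk0.le]
              rw [Finset.sum_congr rfl (fun σ _ => habs σ), ← Finset.mul_sum]
              unfold tvDist
              ring
    have hvt : Tendsto (fun n => (Fintype.card A : ℝ)⁻¹ +
        ∑ i : A, 2 * (Fintype.card A : ℝ)⁻¹ *
          tvDist (treeDist M parent i n) (treeDist M parent i0 n)) atTop
        (nhds ((Fintype.card A : ℝ)⁻¹ + ∑ _i : A, 2 * (Fintype.card A : ℝ)⁻¹ * 0)) := by
      exact Tendsto.const_add _ (tendsto_finset_sum _ fun i _ => (hzero i).const_mul _)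
    rw [show ((Fintype.card A : ℝ)⁻¹ + ∑ _i : A, 2 * (Fintype.card A : ℝ)⁻¹ * 0)
        = (Fintype.card A : ℝ)⁻¹ by simp] at hvt
    have hle : liminf (fun n => mlSuccess M parent n) atTop ≤ (Fintype.card A : ℝ)⁻¹ := by
      calc liminf (fun n => mlSuccess M parent n) atTop
          ≤ liminf (fun n => (Fintype.card A : ℝ)⁻¹ +
              ∑ i : A, 2 * (Fintype.card A : ℝ)⁻¹ *
                tvDist (treeDist M parent i n) (treeDist M parent i0 n)) atTop := by
            refine liminf_le_liminf (Eventually.of_forall hup) ?_ ?_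
            · exact isBoundedUnder_of ⟨0, fun n => hml0 n⟩
            · exact hvt.isBoundedUnder_le.isCoboundedUnder_ge
        _ = (Fintype.card A : ℝ)⁻¹ := hvt.liminf_eq
    exact absurd h (not_lt.mpr hle)
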